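/- Assume (A1) and define H_* = { Σ_{k≥0} α_k Π1_k ∈ H : α_k > 0 for all k }, where the sum is required to converge in H. Then H_* ∩ H_1 is nonempty. Moreover, for any positive decreasing sequence u = (u_m): (i) for any positive C_0 there are elements of H_* ∩ H_1 which also belong to C(u,C_0,1), and hence to C(u,C_0,r) for any positive integer r; (ii) there exists a positive constant C_0 such that there are elements of H_* ∩ H_1 which also belong to C(u,C_0,0). -/

import Mathlib

/- The density is built directly as a series `f = Σ a_k Π1_k` with positive weights chosen
small enough that `a_k ‖Π1_k‖ ≤ ε 2⁻ᵏ u_k` for `k ≥ 1`; then the distance from `f` to `V_m` is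
at most the tail `Σ_{k ≥ m} a_k ‖Π1_k‖ ≤ ε u_m`. The weight `a_0` is reserved to make the total
mass `Σ a_k ∫ π_k` equal to one, which is possible because `∫ π_0 > 0` by (A1). Since the
partial sums increase, their `L²` limit is also their pointwise limit a.e., so `f ≥ 0` and
`∫ f = Σ a_k ∫ π_k = 1`. For `r = 0` only the term `m = 0`, where `V_0 = {0}`, needs a larger
constant. -/

open MeasureTheory ENNReal Filter

noncomputable section

/-- `V_m = span(Π 1_k, 0 ≤ k < m)`. -/
def Vspan {α : Type*} [MeasurableSpace α] {ν : Measure α} (Pi1 : ℕ → Lp ℝ 2 ν) (m : ℕ) :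
    Submodule ℝ (Lp ℝ 2 ν) :=
  Submodule.span ℝ (Pi1 '' Set.Iio m)

/-- The approximation class `C(u,C,r)`. -/
def classV {α : Type*} [MeasurableSpace α] {ν : Measure α} (Pi1 : ℕ → Lp ℝ 2 ν)
    (u : ℕ → ℝ) (C : ℝ) (r : ℕ) : Set (Lp ℝ 2 ν) :=
  {f | ∀ m, r ≤ m → Metric.infDist f (Vspan Pi1 m : Set (Lp ℝ 2 ν)) ≤ C * u m}

/-- Probability densities belonging to `H`. -/
def H1 {α : Type*} [MeasurableSpace α] (ν : Measure α) : Set (Lp ℝ 2 ν) :=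
  {f | 0 ≤ᵐ[ν] ⇑f ∧ ∫ θ, f θ ∂ν = 1}

/-- `H_*`: sums `Σ_k α_k Π1_k` converging in `H`, with all `α_k > 0`. -/
def Hstar {α : Type*} [MeasurableSpace α] {ν : Measure α} (Pi1 : ℕ → Lp ℝ 2 ν) :
    Set (Lp ℝ 2 ν) :=
  {f | ∃ a : ℕ → ℝ, (∀ k, 0 < a k) ∧
    Tendsto (fun M => ∑ k ∈ Finset.range M, a k • Pi1 k) atTop (nhds f)}

theorem exists_pos_hasSum_mul_eq_one {c n e : ℕ → ℝ} (hc₀ : 0 < c 0) (hc : ∀ k, 0 ≤ c k)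
    (hn : ∀ k, 0 ≤ n k) (he : ∀ k, 0 < e k) :
    ∃ a : ℕ → ℝ, (∀ k, 0 < a k) ∧ HasSum (fun k => a k * c k) 1 ∧
      ∀ k, 1 ≤ k → a k * n k ≤ e k := by
  -- the factor `2⁻¹ ^ (k + 1)` keeps `∑_{k ≥ 1} b k * c k ≤ 1/2`, leaving positive mass for `a 0`
  set b : ℕ → ℝ := fun k => min (e k) ((2 : ℝ)⁻¹ ^ (k + 1)) / (n k + c k + 1)
  have hden : ∀ k, 0 < n k + c k + 1 := fun k => by linarith [hn k, hc k]
  have hmin : ∀ k, 0 < min (e k) ((2 : ℝ)⁻¹ ^ (k + 1)) := fun k => lt_min (he k) (by positivity)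
  have hb_pos : ∀ k, 0 < b k := fun k => div_pos (hmin k) (hden k)
  have hb_le : ∀ k x, 0 ≤ x → x ≤ n k + c k + 1 → b k * x ≤ min (e k) ((2 : ℝ)⁻¹ ^ (k + 1)) := by
    intro k x hx hxle
    rw [div_mul_eq_mul_div, div_le_iff₀ (hden k)]
    exact mul_le_mul_of_nonneg_left hxle (hmin k).le
  have hbc : ∀ k, b (k + 1) * c (k + 1) ≤ (2 : ℝ)⁻¹ ^ (k + 2) := fun k =>
    (hb_le (k + 1) _ (hc _) (by linarith [hn (k + 1)])).trans (min_le_right _ _)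
  have hgeom : HasSum (fun k : ℕ => (2 : ℝ)⁻¹ ^ (k + 2)) 2⁻¹ := by
    have h : (fun k : ℕ => (2 : ℝ)⁻¹ ^ (k + 2)) = fun k => (2 : ℝ)⁻¹ ^ 2 * (1 / 2) ^ k := by
      funext k; rw [pow_add, mul_comm, one_div]
    have h2 : (2 : ℝ)⁻¹ ^ 2 * 2 = 2⁻¹ := by norm_num
    have := hasSum_geometric_two.mul_left ((2 : ℝ)⁻¹ ^ 2)
    rw [h]
    rwa [h2] at this
  have hbc_summable : Summable fun k => b (k + 1) * c (k + 1) :=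
    .of_nonneg_of_le (fun k => mul_nonneg (hb_pos _).le (hc _)) hbc hgeom.summable
  set L := ∑' k, b (k + 1) * c (k + 1)
  have hL : L < 1 := by
    have := hbc_summable.tsum_le_tsum hbc hgeom.summable
    rw [hgeom.tsum_eq] at this
    linarith
  obtain ⟨a, ha_zero, ha_succ⟩ : ∃ a : ℕ → ℝ, a 0 = (1 - L) / c 0 ∧ ∀ k, a (k + 1) = b (k + 1) :=
    ⟨fun k => if k = 0 then (1 - L) / c 0 else b k, if_pos rfl, fun k => if_neg k.succ_ne_zero⟩
  have hsucc : HasSum (fun k => a (k + 1) * c (k + 1)) L := by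
    simpa only [ha_succ] using hbc_summable.hasSum
  refine ⟨a, fun k => ?_, ?_, fun k hk => ?_⟩
  · rcases k with _ | k
    · exact ha_zero ▸ div_pos (by linarith) hc₀
    · exact (ha_succ k).symm ▸ hb_pos _
  · have := HasSum.zero_add (f := fun k => a k * c k) hsucc
    rwa [ha_zero, div_mul_cancel₀ _ hc₀.ne', sub_add_cancel] at this
  · obtain ⟨j, rfl⟩ : ∃ j, k = j + 1 := ⟨k - 1, by omega⟩
    rw [ha_succ]
    exact (hb_le _ _ (hn _) (by linarith [hc (j + 1)])).trans (min_le_left _ _)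

section GeometricTail

variable {x u : ℕ → ℝ} {C : ℝ}

theorem summable_geometric_inv_two : Summable fun i : ℕ => (2 : ℝ)⁻¹ ^ i :=
  summable_geometric_of_lt_one (by norm_num) (by norm_num)

theorem apply_add_le_geometric (hC : 0 ≤ C) (hu : Antitone u)
    (hxle : ∀ k, 1 ≤ k → x k ≤ C * (2⁻¹ ^ k * u k)) {m i : ℕ} (hm : 1 ≤ m) :
    x (i + m) ≤ C * u m * 2⁻¹ ^ m * 2⁻¹ ^ i := by
  calc x (i + m) ≤ C * (2⁻¹ ^ (i + m) * u (i + m)) := hxle _ (by omega)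
    _ ≤ C * (2⁻¹ ^ (i + m) * u m) := by
        gcongr
        exact hu (by omega)
    _ = C * u m * 2⁻¹ ^ m * 2⁻¹ ^ i := by ring

theorem summable_of_le_geometric (hx : ∀ k, 0 ≤ x k) (hC : 0 ≤ C) (hu : Antitone u)
    (hxle : ∀ k, 1 ≤ k → x k ≤ C * (2⁻¹ ^ k * u k)) :
    Summable x :=
  (summable_nat_add_iff 1).mp <| .of_nonneg_of_le (fun _ => hx _)
    (fun _ => apply_add_le_geometric hC hu hxle le_rfl)
    (summable_geometric_inv_two.mul_left _)

theorem tsum_nat_add_le_of_le_geometric (hx : ∀ k, 0 ≤ x k) (hC : 0 ≤ C) (hu : Antitone u)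
    (hu_nonneg : ∀ k, 0 ≤ u k) (hxle : ∀ k, 1 ≤ k → x k ≤ C * (2⁻¹ ^ k * u k)) {m : ℕ}
    (hm : 1 ≤ m) :
    ∑' i, x (i + m) ≤ C * u m := by
  have hx_summable := summable_of_le_geometric hx hC hu hxle
  calc ∑' i, x (i + m) ≤ ∑' i : ℕ, C * u m * 2⁻¹ ^ m * 2⁻¹ ^ i :=
        ((summable_nat_add_iff m).mpr hx_summable).tsum_le_tsum
          (fun _ => apply_add_le_geometric hC hu hxle hm)
          (summable_geometric_inv_two.mul_left _)
    _ = C * u m * (2 * 2⁻¹ ^ m) := by rw [tsum_mul_left, tsum_geometric_inv_two]; ring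
    _ ≤ C * u m * 1 := by
        gcongr
        · exact mul_nonneg hC (hu_nonneg m)
        · calc 2 * (2 : ℝ)⁻¹ ^ m ≤ 2 * 2⁻¹ ^ 1 :=
                mul_le_mul_of_nonneg_left (pow_le_pow_of_le_one (by norm_num) (by norm_num) hm)
                  zero_le_two
            _ = 1 := by norm_num
    _ = C * u m := mul_one _

end GeometricTail

section Measure

variable {α : Type*} [MeasurableSpace α] {ν : Measure α}

theorem MeasureTheory.TendstoInMeasure.ae_tendsto_of_monotone {F : ℕ → α → ℝ} {f : α → ℝ}
    (hF : TendstoInMeasure ν F atTop f) (hmono : ∀ᵐ θ ∂ν, Monotone fun n => F n θ) :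
    ∀ᵐ θ ∂ν, Tendsto (fun n => F n θ) atTop (nhds (f θ)) := by
  obtain ⟨ns, hns, hns_tendsto⟩ := hF.exists_seq_tendsto_ae
  filter_upwards [hns_tendsto, hmono] with θ hsub hmono_θ
  -- a monotone sequence with a convergent subsequence converges to the same limit
  rcases tendsto_atTop_of_monotone hmono_θ with htop | ⟨l, hl⟩
  · exact absurd (htop.comp hns.tendsto_atTop) (not_tendsto_atTop_of_tendsto_nhds hsub)
  · rwa [tendsto_nhds_unique hsub (hl.comp hns.tendsto_atTop)]

theorem MeasureTheory.Lp.coeFn_sum_smul {p : ℝ≥0∞} {ι : Type*} (s : Finset ι) (a : ι → ℝ)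
    {F : ι → Lp ℝ p ν} {g : ι → α → ℝ} (hF : ∀ i, ⇑(F i) =ᵐ[ν] g i) :
    ⇑(∑ i ∈ s, a i • F i) =ᵐ[ν] fun θ => ∑ i ∈ s, a i * g i θ := by
  classical
  induction s using Finset.induction_on with
  | empty =>
    simp only [Finset.sum_empty]
    exact Lp.coeFn_zero ℝ p ν
  | insert i s hi ih =>
    simp only [Finset.sum_insert hi]
    filter_upwards [Lp.coeFn_add (a i • F i) (∑ j ∈ s, a j • F j), Lp.coeFn_smul (a i) (F i),
      ih, hF i] with θ h_add h_smul h_sum h_i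
    rw [h_add, Pi.add_apply, h_smul, Pi.smul_apply, smul_eq_mul, h_sum, h_i]

theorem integral_pos_of_coeFn_ae_eq {p : ℝ≥0∞} {F : Lp ℝ p ν} {g : α → ℝ} (hg : 0 ≤ g)
    (hg_int : Integrable g ν) (hF : ⇑F =ᵐ[ν] g) (hF_ne : F ≠ 0) :
    0 < ∫ θ, g θ ∂ν := by
  refine (integral_nonneg hg).lt_of_ne fun h => hF_ne ?_
  have hg_zero : g =ᵐ[ν] 0 := (integral_eq_zero_iff_of_nonneg hg hg_int).mp h.symm
  exact Lp.ext (hF.trans (hg_zero.trans (Lp.coeFn_zero ℝ p ν).symm))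

end Measure

section MixtureDensities

variable {α : Type*} [MeasurableSpace α] {ν : Measure α} {π : α → ℕ → ℝ}
  {Pi1 : ℕ → Lp ℝ 2 ν}

theorem tsum_smul_mem_H1 (hπ_nonneg : ∀ θ k, 0 ≤ π θ k)
    (hPi1 : ∀ k, ⇑(Pi1 k) =ᵐ[ν] fun θ => π θ k) (hπ_int : ∀ k, Integrable (fun θ => π θ k) ν)
    {a : ℕ → ℝ} (ha : ∀ k, 0 ≤ a k) (hsum : Summable fun k => a k • Pi1 k)
    (hmass : HasSum (fun k => a k * ∫ θ, π θ k ∂ν) 1) :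
    ∑' k, a k • Pi1 k ∈ H1 ν := by
  have hterm_nonneg : ∀ θ k, 0 ≤ a k * π θ k := fun θ k => mul_nonneg (ha k) (hπ_nonneg θ k)
  have hpartial : ∀ᵐ θ ∂ν, ∀ n,
      (∑ k ∈ Finset.range n, a k • Pi1 k : Lp ℝ 2 ν) θ = ∑ k ∈ Finset.range n, a k * π θ k :=
    ae_all_iff.mpr fun n => Lp.coeFn_sum_smul _ a hPi1
  have hpointwise : ∀ᵐ θ ∂ν, HasSum (fun k => a k * π θ k) ((∑' k, a k • Pi1 k : Lp ℝ 2 ν) θ) := by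
    have hmono : ∀ᵐ θ ∂ν, Monotone fun n => (∑ k ∈ Finset.range n, a k • Pi1 k : Lp ℝ 2 ν) θ := by
      filter_upwards [hpartial] with θ hθ
      simpa only [hθ] using monotone_nat_of_le_succ fun n => by
        simpa only [Finset.sum_range_succ] using le_add_of_nonneg_right (hterm_nonneg θ n)
    filter_upwards [(tendstoInMeasure_of_tendsto_Lp
      hsum.hasSum.tendsto_sum_nat).ae_tendsto_of_monotone hmono, hpartial] with θ hlim hθ
    rw [hasSum_iff_tendsto_nat_of_nonneg (hterm_nonneg θ)]
    simpa only [hθ] using hlim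
  refine ⟨hpointwise.mono fun θ h => h.nonneg (hterm_nonneg θ), ?_⟩
  have hint : ∀ k, Integrable (fun θ => a k * π θ k) ν := fun k => (hπ_int k).const_mul _
  calc ∫ θ, (∑' k, a k • Pi1 k : Lp ℝ 2 ν) θ ∂ν = ∫ θ, ∑' k, a k * π θ k ∂ν :=
        integral_congr_ae (hpointwise.mono fun θ h => h.tsum_eq.symm)
    _ = ∑' k, ∫ θ, a k * π θ k ∂ν := by
        refine (integral_tsum_of_summable_integral_norm hint ?_).symm
        simpa only [Real.norm_of_nonneg (hterm_nonneg _ _), integral_const_mul]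
          using hmass.summable
    _ = 1 := by simpa only [integral_const_mul] using hmass.tsum_eq

theorem sum_range_smul_mem_Vspan (a : ℕ → ℝ) (m : ℕ) :
    ∑ k ∈ Finset.range m, a k • Pi1 k ∈ Vspan Pi1 m :=
  Submodule.sum_mem _ fun k hk =>
    Submodule.smul_mem _ _ (Submodule.subset_span ⟨k, Finset.mem_range.mp hk, rfl⟩)

theorem tsum_mem_classV {u : ℕ → ℝ} {C : ℝ} {r : ℕ} {a : ℕ → ℝ}
    (hsum : Summable fun k => ‖a k • Pi1 k‖)
    (htail : ∀ m, r ≤ m → ∑' i, ‖a (i + m) • Pi1 (i + m)‖ ≤ C * u m) :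
    ∑' k, a k • Pi1 k ∈ classV Pi1 u C r := by
  intro m hm
  have hrest : ∑' k, a k • Pi1 k - ∑ k ∈ Finset.range m, a k • Pi1 k
      = ∑' i, a (i + m) • Pi1 (i + m) :=
    sub_eq_of_eq_add' (hsum.of_norm.sum_add_tsum_nat_add m).symm
  calc Metric.infDist (∑' k, a k • Pi1 k) (Vspan Pi1 m)
      ≤ ‖∑' k, a k • Pi1 k - ∑ k ∈ Finset.range m, a k • Pi1 k‖ := by
        rw [← dist_eq_norm]
        exact Metric.infDist_le_dist_of_mem (sum_range_smul_mem_Vspan a m)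
    _ ≤ ∑' i, ‖a (i + m) • Pi1 (i + m)‖ := by
        rw [hrest]
        exact norm_tsum_le_tsum_norm ((summable_nat_add_iff m).mpr hsum)
    _ ≤ C * u m := htail m hm

theorem Vspan_zero : Vspan Pi1 0 = ⊥ := by
  simp [Vspan]

theorem mem_classV_zero_of_mem_classV_one {u : ℕ → ℝ} (hu_pos : ∀ m, 0 < u m) {C : ℝ} {f : Lp ℝ 2 ν}
    (hf : f ∈ classV Pi1 u C 1) :
    f ∈ classV Pi1 u (max C (‖f‖ / u 0)) 0 := by
  rintro (_ | m) -
  · rw [Vspan_zero, Submodule.bot_coe, Metric.infDist_singleton, dist_zero_right]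
    calc ‖f‖ = ‖f‖ / u 0 * u 0 := (div_mul_cancel₀ _ (hu_pos 0).ne').symm
      _ ≤ max C (‖f‖ / u 0) * u 0 := by gcongr; exacts [(hu_pos 0).le, le_max_right _ _]
  · calc Metric.infDist f (Vspan Pi1 (m + 1)) ≤ C * u (m + 1) := hf _ (by omega)
      _ ≤ max C (‖f‖ / u 0) * u (m + 1) := by gcongr; exacts [(hu_pos _).le, le_max_left _ _]

theorem exists_mem_Hstar_inter_H1_inter_classV (hπ_nonneg : ∀ θ k, 0 ≤ π θ k)
    (hPi1 : ∀ k, ⇑(Pi1 k) =ᵐ[ν] fun θ => π θ k) (hπ_int : ∀ k, Integrable (fun θ => π θ k) ν)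
    (hPi1_ne : Pi1 0 ≠ 0) {u : ℕ → ℝ} (hu_pos : ∀ m, 0 < u m) (hu_dec : Antitone u)
    {ε : ℝ} (hε : 0 < ε) :
    ∃ f ∈ Hstar Pi1 ∩ H1 ν, f ∈ classV Pi1 u ε 1 := by
  obtain ⟨a, ha_pos, hmass, hbound⟩ := exists_pos_hasSum_mul_eq_one
    (integral_pos_of_coeFn_ae_eq (hπ_nonneg · 0) (hπ_int 0) (hPi1 0) hPi1_ne)
    (fun k => integral_nonneg (hπ_nonneg · k)) (fun k => norm_nonneg (Pi1 k))
    (e := fun k => ε * (2⁻¹ ^ k * u k)) (fun k => by have := hu_pos k; positivity)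
  have hnorm : ∀ k, ‖a k • Pi1 k‖ = a k * ‖Pi1 k‖ := fun k => by
    rw [norm_smul, Real.norm_of_nonneg (ha_pos k).le]
  have hnorm_bound : ∀ k, 1 ≤ k → ‖a k • Pi1 k‖ ≤ ε * (2⁻¹ ^ k * u k) := fun k hk =>
    (hnorm k).symm ▸ hbound k hk
  have hsum : Summable fun k => ‖a k • Pi1 k‖ :=
    summable_of_le_geometric (fun _ => norm_nonneg _) hε.le hu_dec hnorm_bound
  refine ⟨∑' k, a k • Pi1 k, ⟨⟨a, ha_pos, hsum.of_norm.hasSum.tendsto_sum_nat⟩,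
    tsum_smul_mem_H1 hπ_nonneg hPi1 hπ_int (fun k => (ha_pos k).le) hsum.of_norm hmass⟩,
    tsum_mem_classV hsum fun m hm => ?_⟩
  exact tsum_nat_add_le_of_le_geometric (fun _ => norm_nonneg _) hε.le hu_dec
    (fun k => (hu_pos k).le) hnorm_bound hm

end MixtureDensities

theorem statement8_general
    {d : ℕ} {Θ : Set (Fin d → ℝ)}
    (ν : Measure Θ)
    (π : Θ → ℕ → ℝ)
    (hπ_nonneg : ∀ θ k, 0 ≤ π θ k)
    -- (A1)
    (Pi1 : ℕ → Lp ℝ 2 ν) (hPi1 : ∀ k, ⇑(Pi1 k) =ᵐ[ν] fun θ => π θ k)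
    (hPi1_int : ∀ k, Integrable (fun θ => π θ k) ν)
    (hPi1_li : LinearIndependent ℝ Pi1)
    (u : ℕ → ℝ) (hu_pos : ∀ m, 0 < u m) (hu_dec : Antitone u) :
    (Hstar Pi1 ∩ H1 ν).Nonempty ∧
    (∀ C₀ : ℝ, 0 < C₀ → ∃ f, f ∈ Hstar Pi1 ∩ H1 ν ∧
      ∀ r : ℕ, 1 ≤ r → f ∈ classV Pi1 u C₀ r) ∧
    (∃ C₀ : ℝ, 0 < C₀ ∧ ∃ f, f ∈ Hstar Pi1 ∩ H1 ν ∧ f ∈ classV Pi1 u C₀ 0) := by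
  have hexists {ε : ℝ} (hε : 0 < ε) : ∃ f ∈ Hstar Pi1 ∩ H1 ν, f ∈ classV Pi1 u ε 1 :=
    exists_mem_Hstar_inter_H1_inter_classV hπ_nonneg hPi1 hPi1_int (hPi1_li.ne_zero 0)
      hu_pos hu_dec hε
  obtain ⟨f, hf, hf_class⟩ := hexists one_pos
  refine ⟨⟨f, hf⟩, fun C₀ hC₀ => ?_, ⟨_, one_pos.trans_le (le_max_left _ _), f, hf,
    mem_classV_zero_of_mem_classV_one hu_pos hf_class⟩⟩
  obtain ⟨g, hg, hg_class⟩ := hexists hC₀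
  exact ⟨g, hg, fun r hr m hm => hg_class m (hr.trans hm)⟩

theorem statement8
    {d : ℕ} {Θ : Set (Fin d → ℝ)} (hΘ : MeasurableSet Θ)
    (ν : Measure Θ) [SigmaFinite ν]
    (π : Θ → ℕ → ℝ)
    (hπ_meas : ∀ k, Measurable fun θ => π θ k)
    (hπ_nonneg : ∀ θ k, 0 ≤ π θ k)
    (hπ_sum : ∀ θ, HasSum (fun k => π θ k) 1)
    -- (A1)
    (Pi1 : ℕ → Lp ℝ 2 ν) (hPi1 : ∀ k, ⇑(Pi1 k) =ᵐ[ν] fun θ => π θ k)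
    (hPi1_int : ∀ k, Integrable (fun θ => π θ k) ν)
    (hPi1_li : LinearIndependent ℝ Pi1)
    (u : ℕ → ℝ) (hu_pos : ∀ m, 0 < u m) (hu_dec : Antitone u) :
    (Hstar Pi1 ∩ H1 ν).Nonempty ∧
    (∀ C₀ : ℝ, 0 < C₀ → ∃ f, f ∈ Hstar Pi1 ∩ H1 ν ∧
      ∀ r : ℕ, 1 ≤ r → f ∈ classV Pi1 u C₀ r) ∧
    (∃ C₀ : ℝ, 0 < C₀ ∧ ∃ f, f ∈ Hstar Pi1 ∩ H1 ν ∧ f ∈ classV Pi1 u C₀ 0) :=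
  statement8_general ν π hπ_nonneg Pi1 hPi1 hPi1_int hPi1_li u hu_pos hu_dec

end
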